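/- arXiv:2010.11331 — 2 statements merged into one kernel-verified Lean document; each statement's English description precedes it below -/
import Mathlib

section
/- Let f ∈ L¹(𝕋²), k = (k₁,k₂) ∈ ℤ² and v ∈ ℤ² \ {0} with k·v = 0. If k₂ ≠ 0, then the function y ↦ I_v f(π(0,y)) is defined for a.e. y ∈ [0,1] and is integrable, and f̂(k) = ∫₀¹ I_v f(π(0,y)) e^{−2πi k₂ y} dy. Similarly, if k₁ ≠ 0, then the function x ↦ I_v f(π(x,0)) is defined for a.e. x ∈ [0,1] and is integrable, and f̂(k) = ∫₀¹ I_v f(π(x,0)) e^{−2πi k₁ x} dx. -/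
noncomputable section
open MeasureTheory Real
open scoped ENNReal NNReal

instance : Fact ((0:ℝ) < 1) := ⟨one_pos⟩

/-- The flat torus `𝕋ⁿ = ℝⁿ/ℤⁿ`, with the probability Haar (Lebesgue) measure. -/
abbrev Torus (n : ℕ) := Fin n → AddCircle (1:ℝ)

/-- The quotient map `π : ℝⁿ → 𝕋ⁿ`. -/
def tmap {n : ℕ} (x : Fin n → ℝ) : Torus n := fun i => (x i : AddCircle (1:ℝ))

/-- The character `x ↦ e^{2πi k·x}` on the torus. -/
def char {n : ℕ} (k : Fin n → ℤ) (x : Torus n) : ℂ := ∏ i, fourier (k i) (x i)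

/-- The Fourier coefficient `f̂(k) = ∫ f(x) e^{−2πi k·x} dx`. -/
def fCoeff {n : ℕ} (f : Torus n → ℂ) (k : Fin n → ℤ) : ℂ := ∫ x, char (-k) x * f x

/-- The X-ray transform on `𝕋²` in direction `v ∈ ℤ² \ {0}`:
`I_v f(x) = ∫₀¹ f(x + t v) dt`. -/
def xray (v : Fin 2 → ℤ) (f : Torus 2 → ℂ) (x : Torus 2) : ℂ :=
  ∫ t in (0:ℝ)..1, f (x + tmap fun i => t * (v i : ℝ))

/-!
If `v₁ ≠ 0`, the map `(t, y) ↦ π(0, y) + t v` from `(0,1]²` to `𝕋²` reads `(t, y) ↦ (v₁ t, y + v₂ t)`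
in coordinates: a skew product of the `|v₁|`-fold covering `x ↦ v₁ x` of the circle with
translations, hence measure-preserving. Fubini then gives `∫ f = ∫₀¹ I_v f(π(0, y)) dy`. Applied to
`f` times the character `e^{-2πi k·x}`, which is constant along lines of direction `v` because
`k·v = 0`, this is the formula for `f̂(k)`. When `k₂ ≠ 0`, `k·v = 0` and `v ≠ 0` force `v₁ ≠ 0`; the
case `k₁ ≠ 0` follows by swapping the coordinates. (Subscripts are 1-based: `v₁` is `v 0`.)
-/

open Set Filter

theorem AddCircle.measurePreserving_zsmul_prod_add_zsmul {T : ℝ} [Fact (0 < T)] {a : ℤ}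
    (ha : a ≠ 0) (b : ℤ) :
    MeasurePreserving fun p : AddCircle T × AddCircle T => (a • p.1, p.2 + b • p.1) :=
  (Measure.measurePreserving_zsmul volume ha).skew_product (by fun_prop)
    (Eventually.of_forall fun x => map_add_right_eq_self volume (b • x))

theorem continuous_char {n : ℕ} (k : Fin n → ℤ) : Continuous (char k) := by
  unfold char
  fun_prop

theorem norm_char {n : ℕ} (k : Fin n → ℤ) (x : Torus n) : ‖char k x‖ = 1 := by
  simp [char, fourier_apply, Circle.norm_coe]

theorem char_add {n : ℕ} (k : Fin n → ℤ) (x y : Torus n) :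
    char k (x + y) = char k x * char k y := by
  simp only [char, Pi.add_apply, fourier_apply, zsmul_add, AddCircle.toCircle_add,
    Circle.coe_mul, Finset.prod_mul_distrib]

theorem char_tmap {n : ℕ} (k : Fin n → ℤ) (x : Fin n → ℝ) :
    char k (tmap x) = Complex.exp (2 * π * Complex.I * ∑ i, (k i : ℂ) * x i) := by
  simp only [char, tmap, fourier_coe_apply, Finset.mul_sum, Complex.exp_sum]
  congr 1 with i
  push_cast
  ring_nf

theorem MeasureTheory.Integrable.char_mul {n : ℕ} {f : Torus n → ℂ} (hf : Integrable f)
    (k : Fin n → ℤ) : Integrable fun x => char k x * f x :=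
  hf.bdd_mul (continuous_char k).aestronglyMeasurable
    (Eventually.of_forall fun x => (norm_char k x).le)

theorem xray_char_mul {k v : Fin 2 → ℤ} (hkv : ∑ i, k i * v i = 0) (f : Torus 2 → ℂ)
    (x : Torus 2) : xray v (fun y => char k y * f y) x = char k x * xray v f x := by
  have hline (t : ℝ) : char k (tmap fun i => t * (v i : ℝ)) = 1 := by
    have hsum : ∑ i, (k i : ℂ) * ((t * v i : ℝ) : ℂ) = t * ((∑ i, k i * v i : ℤ) : ℂ) := by
      push_cast
      rw [Finset.mul_sum]
      congr 1 with i
      ring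
    rw [char_tmap, hsum, hkv]
    simp
  simp only [xray, char_add, hline, mul_one, intervalIntegral.integral_const_mul]

theorem measurePreserving_vertical_add_line {v : Fin 2 → ℤ} (hv : v 0 ≠ 0) :
    MeasurePreserving (fun p : ℝ × ℝ => tmap ![0, p.2] + tmap fun i => p.1 * (v i : ℝ))
      ((volume.restrict (Ioc 0 1)).prod (volume.restrict (Ioc 0 1))) volume := by
  have hmk : MeasurePreserving ((↑) : ℝ → AddCircle (1 : ℝ)) (volume.restrict (Ioc 0 1)) := by
    simpa using AddCircle.measurePreserving_mk (1 : ℝ) 0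
  convert (volume_preserving_finTwoArrow _).symm.comp
    ((AddCircle.measurePreserving_zsmul_prod_add_zsmul hv (v 1)).comp (hmk.prod hmk)) using 1
  funext p i
  fin_cases i <;> simp [tmap, ← QuotientAddGroup.mk_zsmul, mul_comm]

theorem integral_eq_intervalIntegral_xray {v : Fin 2 → ℤ} (hv : v 0 ≠ 0) {f : Torus 2 → ℂ}
    (hf : Integrable f) :
    IntervalIntegrable (fun y => xray v f (tmap ![0, y])) volume 0 1 ∧
      ∫ x, f x = ∫ y in (0 : ℝ)..1, xray v f (tmap ![0, y]) := by
  have hΦ := measurePreserving_vertical_add_line hv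
  have hfΦ := (hΦ.integrable_comp hf.aestronglyMeasurable).2 hf
  simp only [intervalIntegrable_iff_integrableOn_Ioc_of_le zero_le_one,
    intervalIntegral.integral_of_le zero_le_one, xray]
  refine ⟨hfΦ.integral_prod_right, ?_⟩
  rw [← hΦ.map_eq, integral_map hΦ.aemeasurable (hΦ.map_eq ▸ hf.aestronglyMeasurable)]
  exact integral_prod_symm _ hfΦ

theorem fCoeff_eq_intervalIntegral_xray_vertical {f : Torus 2 → ℂ} (hf : Integrable f)
    {k v : Fin 2 → ℤ} (hkv : ∑ i, k i * v i = 0) (hv : v 0 ≠ 0) :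
    IntervalIntegrable (fun y : ℝ => xray v f (tmap ![0, y])) volume 0 1 ∧
      fCoeff f k = ∫ y in (0:ℝ)..1, xray v f (tmap ![0, y]) *
        Complex.exp (-2 * (π : ℂ) * Complex.I * ((k 1 : ℤ) : ℂ) * (y : ℂ)) := by
  refine ⟨(integral_eq_intervalIntegral_xray hv hf).1, ?_⟩
  have hkv' : ∑ i, (-k) i * v i = 0 := by simp [hkv]
  rw [fCoeff, (integral_eq_intervalIntegral_xray hv (hf.char_mul (-k))).2]
  refine intervalIntegral.integral_congr fun y _ => ?_
  have hchar : char (-k) (tmap ![0, y]) =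
      Complex.exp (-2 * (π : ℂ) * Complex.I * ((k 1 : ℤ) : ℂ) * (y : ℂ)) := by
    rw [char_tmap, Fin.sum_univ_two]
    congr 1
    simp only [Pi.neg_apply, Matrix.cons_val_zero, Matrix.cons_val_one, Matrix.cons_val_fin_one]
    push_cast
    ring
  rw [xray_char_mul hkv', hchar, mul_comm]

theorem measurePreserving_comp_perm {n : ℕ} (e : Equiv.Perm (Fin n)) :
    MeasurePreserving fun x : Torus n => x ∘ e :=
  volume_preserving_arrowCongr' e.symm (MeasurableEquiv.refl _) (MeasurePreserving.id _)

theorem fCoeff_comp_perm {n : ℕ} (f : Torus n → ℂ) (k : Fin n → ℤ) (e : Equiv.Perm (Fin n)) :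
    fCoeff (fun x => f (x ∘ e)) (k ∘ e.symm) = fCoeff f k := by
  have hchar (x : Torus n) : char (-(k ∘ e.symm)) x = char (-k) (x ∘ e) := by
    simp only [char]
    rw [← Equiv.prod_comp e]
    simp
  simp only [fCoeff, hchar]
  exact (measurePreserving_comp_perm e).integral_comp
    (MeasurableEquiv.arrowCongr' e.symm (.refl _)).measurableEmbedding fun y => char (-k) y * f y

theorem xray_comp_perm (v : Fin 2 → ℤ) (f : Torus 2 → ℂ) (e : Equiv.Perm (Fin 2))
    (x : Torus 2) : xray (v ∘ e.symm) (fun y => f (y ∘ e)) x = xray v f (x ∘ e) := by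
  simp only [xray]
  congr 1 with t
  congr 1 with i
  simp [tmap]

theorem fCoeff_eq_intervalIntegral_xray_horizontal {f : Torus 2 → ℂ} (hf : Integrable f)
    {k v : Fin 2 → ℤ} (hkv : ∑ i, k i * v i = 0) (hv : v 1 ≠ 0) :
    IntervalIntegrable (fun x : ℝ => xray v f (tmap ![x, 0])) volume 0 1 ∧
      fCoeff f k = ∫ x in (0:ℝ)..1, xray v f (tmap ![x, 0]) *
        Complex.exp (-2 * (π : ℂ) * Complex.I * ((k 0 : ℤ) : ℂ) * (x : ℂ)) := by
  set e := Equiv.swap (0 : Fin 2) 1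
  have hfe : Integrable fun x => f (x ∘ e) :=
    ((measurePreserving_comp_perm e).integrable_comp hf.aestronglyMeasurable).2 hf
  have hkve : ∑ i, (k ∘ e.symm) i * (v ∘ e.symm) i = 0 := by
    rw [← hkv]
    exact Equiv.sum_comp e.symm fun i => k i * v i
  have htmap (y : ℝ) : tmap ![0, y] ∘ e = tmap ![y, 0] := by
    funext i
    fin_cases i <;> rfl
  obtain ⟨hint, hcoeff⟩ :=
    fCoeff_eq_intervalIntegral_xray_vertical hfe hkve (by simpa [e] using hv)
  simp only [xray_comp_perm, htmap, fCoeff_comp_perm] at hint hcoeff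
  exact ⟨hint, by simpa [e] using hcoeff⟩

theorem fourierCoeff_eq_intervalIntegral_xray
    (f : Torus 2 → ℂ) (hf : Integrable f (volume : Measure (Torus 2)))
    (k v : Fin 2 → ℤ) (hv : v ≠ 0) (hkv : (∑ i, k i * v i) = 0) :
    (k 1 ≠ 0 →
      IntervalIntegrable (fun y : ℝ => xray v f (tmap ![0, y])) volume 0 1 ∧
      fCoeff f k = ∫ y in (0:ℝ)..1,
        xray v f (tmap ![0, y]) * Complex.exp (-2 * (π : ℂ) * Complex.I * ((k 1 : ℤ) : ℂ) * (y : ℂ))) ∧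
    (k 0 ≠ 0 →
      IntervalIntegrable (fun x : ℝ => xray v f (tmap ![x, 0])) volume 0 1 ∧
      fCoeff f k = ∫ x in (0:ℝ)..1,
        xray v f (tmap ![x, 0]) * Complex.exp (-2 * (π : ℂ) * Complex.I * ((k 0 : ℤ) : ℂ) * (x : ℂ))) := by
  have hkv₂ : k 0 * v 0 + k 1 * v 1 = 0 := by simpa [Fin.sum_univ_two] using hkv
  refine ⟨fun hk₁ => fCoeff_eq_intervalIntegral_xray_vertical hf hkv fun hv₀ => ?_,
    fun hk₀ => fCoeff_eq_intervalIntegral_xray_horizontal hf hkv fun hv₁ => ?_⟩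
  · have hv₁ : v 1 = 0 := by simpa [hv₀, hk₁] using hkv₂
    exact hv (funext fun i => by fin_cases i <;> assumption)
  · have hv₀ : v 0 = 0 := by simpa [hv₁, hk₀] using hkv₂
    exact hv (funext fun i => by fin_cases i <;> assumption)
end
end

section
/- Suppose r, t, s, δ ∈ ℝ satisfy 2s + t ≥ r, δ ≥ 0, and s > 0, and let f ∈ H^{r+δ}(𝕋²). Then the regularized reconstruction operator P^s_α I* with parameter choice α(ε) = √ε is a regularization strategy: lim_{ε→0⁺} sup{ ‖P^s_{√ε} I*(I f + g) − f‖_{H^r(𝕋²)} : g ∈ H^t(𝕋²×Q), ‖g‖_{H^t(𝕋²×Q)} ≤ ε } = 0. -/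
noncomputable section
open scoped ENNReal NNReal

/-- `⟨k⟩² = 1 + |k|²` for `k ∈ ℤ²`. -/
def nrmSq (k : Fin 2 → ℤ) : ℝ := 1 + ((k 0 : ℝ)^2 + (k 1 : ℝ)^2)

/-- The dot product on `ℤ²`. -/
def dotZ (k v : Fin 2 → ℤ) : ℤ := ∑ i, k i * v i

/-- The X-ray transform acting on Fourier coefficient sequences:
`(I a)(k,v) = a k` if `k ⊥ v` and `0` otherwise. -/
def IaQ (Q : Set (Fin 2 → ℤ)) (a : (Fin 2 → ℤ) → ℂ) (k : Fin 2 → ℤ) (v : Q) : ℂ :=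
  if dotZ k v.1 = 0 then a k else 0

/-- The adjoint `I*` of the X-ray transform, on Fourier coefficient sequences:
`(I* g)(k) = g(k, v_k)` (for `k = 0`, `g(0, ·)` is constant so the choice `vk 0` is immaterial). -/
def Istar (Q : Set (Fin 2 → ℤ)) (vk : (Fin 2 → ℤ) → Q)
    (g : (Fin 2 → ℤ) → Q → ℂ) (k : Fin 2 → ℤ) : ℂ :=
  g k (vk k)

/-- The squared `H^s(𝕋²)` norm of a Fourier coefficient sequence
(`ℝ≥0∞`-valued, `∞` when the sequence is not in `H^s`):
`‖a‖² = Σ_k ⟨k⟩^{2s} |a k|²`. -/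
def hsNormSq (s : ℝ) (a : (Fin 2 → ℤ) → ℂ) : ℝ≥0∞ :=
  ∑' k : Fin 2 → ℤ, ENNReal.ofReal (nrmSq k ^ s * ‖a k‖ ^ 2)

/-- The squared `H^s(𝕋² × Q)` norm:
`‖g‖² = |g(0,0)|² + Σ_{k ≠ 0} Σ_{v ∈ Q} ⟨k⟩^{2s} |g(k,v)|²`. -/
def hsQNormSq (s : ℝ) (Q : Set (Fin 2 → ℤ)) (vk : (Fin 2 → ℤ) → Q)
    (g : (Fin 2 → ℤ) → Q → ℂ) : ℝ≥0∞ :=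
  ENNReal.ofReal (‖g 0 (vk 0)‖ ^ 2) +
    ∑' (k : {k : Fin 2 → ℤ // k ≠ 0}) (v : Q),
      ENNReal.ofReal (nrmSq k.1 ^ s * ‖g k.1 v‖ ^ 2)

/-- The inner product generating the `H^s(𝕋²)` norm. -/
def hsInner (s : ℝ) (a b : (Fin 2 → ℤ) → ℂ) : ℂ :=
  ∑' k : Fin 2 → ℤ, (Complex.ofReal (nrmSq k ^ s)) * (a k * (starRingEnd ℂ) (b k))

/-- The inner product generating the `H^s(𝕋² × Q)` norm. -/
def hsQInner (s : ℝ) (Q : Set (Fin 2 → ℤ)) (vk : (Fin 2 → ℤ) → Q)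
    (g h : (Fin 2 → ℤ) → Q → ℂ) : ℂ :=
  g 0 (vk 0) * (starRingEnd ℂ) (h 0 (vk 0)) +
    ∑' (k : {k : Fin 2 → ℤ // k ≠ 0}) (v : Q),
      (Complex.ofReal (nrmSq k.1 ^ s)) * (g k.1 v * (starRingEnd ℂ) (h k.1 v))

/-- The Fourier multiplier `P^β_α`, `(P^β_α a)(k) = (1 + α ⟨k⟩^{2β})⁻¹ a(k)`. -/
def Pmul (β : ℝ) (α : ℝ) (a : (Fin 2 → ℤ) → ℂ) (k : Fin 2 → ℤ) : ℂ :=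
  (Complex.ofReal (1 + α * nrmSq k ^ β))⁻¹ * a k

/-
Since `I* (I f + g) = f + I* g`, the reconstruction error splits as
`P^s_α I* g + (P^s_α f - f)`. The noise term is controlled by
`⟨k⟩^r (1 + α⟨k⟩^{2s})⁻² ≤ α⁻² ⟨k⟩^t` (using `r ≤ 2s + t`) together with
`‖I* g‖_{H^t} ≤ ‖g‖_{H^t(𝕋²×Q)} ≤ ε`, so it is at most `ε / α = √ε`. The approximation
term tends to `0` as `α → 0` by dominated convergence, the multiplier `1 - (1 + α⟨k⟩^{2s})⁻¹`
lying in `[0, 1]` and `f ∈ H^{r+δ} ⊆ H^r`.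
-/

open Filter Topology

theorem ENNReal.tendsto_tsum_of_dominated_convergence {ι β : Type*} {l : Filter ι}
    [l.IsCountablyGenerated] {F : ι → β → ℝ≥0∞} {f : β → ℝ≥0∞} (bound : β → ℝ≥0∞)
    (h_bound : ∀ᶠ n in l, ∀ b, F n b ≤ bound b) (h_fin : ∑' b, bound b ≠ ∞)
    (h_lim : ∀ b, Tendsto (fun n => F n b) l (𝓝 (f b))) :
    Tendsto (fun n => ∑' b, F n b) l (𝓝 (∑' b, f b)) := by
  let _ : MeasurableSpace β := ⊤
  simp only [← MeasureTheory.lintegral_count' measurable_from_top] at h_fin ⊢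
  exact MeasureTheory.tendsto_lintegral_filter_of_dominated_convergence bound
    (.of_forall fun _ => measurable_from_top) (h_bound.mono fun _ h => .of_forall h) h_fin
    (.of_forall h_lim)

theorem Real.rpow_mul_inv_one_add_mul_rpow_sq_le {x α r s t : ℝ} (hx : 1 ≤ x) (hα : 0 < α)
    (h : r ≤ t + 2 * s) : x ^ r * ((1 + α * x ^ s)⁻¹) ^ 2 ≤ α⁻¹ ^ 2 * x ^ t := by
  have hx₀ : 0 < x := by linarith
  have hxs : 0 ≤ x ^ s := by positivity
  have hdamp : x ^ s * (1 + α * x ^ s)⁻¹ ≤ α⁻¹ := by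
    rw [← div_eq_mul_inv, div_le_iff₀ (by positivity), mul_add, inv_mul_cancel_left₀ hα.ne']
    linarith [inv_pos.2 hα]
  calc x ^ r * ((1 + α * x ^ s)⁻¹) ^ 2
      ≤ x ^ (t + 2 * s) * ((1 + α * x ^ s)⁻¹) ^ 2 := by
        gcongr
    _ = x ^ t * (x ^ s * (1 + α * x ^ s)⁻¹) ^ 2 := by
        rw [two_mul, Real.rpow_add hx₀, Real.rpow_add hx₀]; ring
    _ ≤ x ^ t * α⁻¹ ^ 2 := by gcongr
    _ = α⁻¹ ^ 2 * x ^ t := mul_comm _ _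

lemma one_le_nrmSq (k : Fin 2 → ℤ) : 1 ≤ nrmSq k :=
  le_add_of_nonneg_right (by positivity)

lemma nrmSq_zero : nrmSq 0 = 1 := by simp [nrmSq]

section Pmul

variable {β α : ℝ} {a b : (Fin 2 → ℤ) → ℂ} {k : Fin 2 → ℤ}

lemma Pmul_zero_left : Pmul β 0 a = a := by
  ext k; simp [Pmul]

lemma Pmul_add : Pmul β α (a + b) = Pmul β α a + Pmul β α b := by
  ext k; simp only [Pmul, Pi.add_apply, mul_add]

lemma norm_Pmul (hα : 0 ≤ α) : ‖Pmul β α a k‖ = (1 + α * nrmSq k ^ β)⁻¹ * ‖a k‖ := by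
  have : 0 ≤ nrmSq k := by linarith [one_le_nrmSq k]
  rw [Pmul, norm_mul, norm_inv, Complex.norm_real, Real.norm_of_nonneg (by positivity)]

lemma norm_Pmul_sub_le (hα : 0 ≤ α) : ‖Pmul β α a k - a k‖ ≤ ‖a k‖ := by
  have : 0 ≤ nrmSq k := by linarith [one_le_nrmSq k]
  have hc : 1 ≤ 1 + α * nrmSq k ^ β := le_add_of_nonneg_right (by positivity)
  have hsub : Pmul β α a k - a k = (((1 + α * nrmSq k ^ β)⁻¹ - 1 : ℝ) : ℂ) * a k := by
    simp only [Pmul]; push_cast; ring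
  rw [hsub, norm_mul, Complex.norm_real, Real.norm_eq_abs]
  refine mul_le_of_le_one_left (norm_nonneg _) (abs_le.2 ⟨?_, ?_⟩)
  · linarith [inv_pos.2 (zero_lt_one.trans_le hc)]
  · linarith [inv_le_one_of_one_le₀ hc]

end Pmul

section Sobolev

variable {s s' r t α : ℝ} {a b : (Fin 2 → ℤ) → ℂ}

lemma hsNormSq_mono (h : s ≤ s') : hsNormSq s a ≤ hsNormSq s' a :=
  ENNReal.tsum_le_tsum fun k => ENNReal.ofReal_le_ofReal <|
    mul_le_mul_of_nonneg_right (Real.rpow_le_rpow_of_exponent_le (one_le_nrmSq k) h)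
      (by positivity)

lemma hsNormSq_add_le : hsNormSq s (a + b) ≤ 2 * hsNormSq s a + 2 * hsNormSq s b := by
  simp only [hsNormSq, ← ENNReal.tsum_mul_left, ← ENNReal.tsum_add]
  refine ENNReal.tsum_le_tsum fun k => ?_
  have hw : 0 ≤ nrmSq k ^ s := by have := one_le_nrmSq k; positivity
  have hsq : ‖a k + b k‖ ^ 2 ≤ 2 * (‖a k‖ ^ 2 + ‖b k‖ ^ 2) :=
    (pow_le_pow_left₀ (norm_nonneg _) (norm_add_le _ _) 2).trans add_sq_le
  rw [← ENNReal.ofReal_ofNat 2, ← ENNReal.ofReal_mul zero_le_two,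
    ← ENNReal.ofReal_mul zero_le_two, ← ENNReal.ofReal_add (by positivity) (by positivity)]
  refine ENNReal.ofReal_le_ofReal ?_
  simp only [Pi.add_apply]
  nlinarith

lemma hsNormSq_Pmul_le (hα : 0 < α) (h : r ≤ t + 2 * s) :
    hsNormSq r (Pmul s α a) ≤ ENNReal.ofReal (α⁻¹ ^ 2) * hsNormSq t a := by
  simp only [hsNormSq, ← ENNReal.tsum_mul_left]
  refine ENNReal.tsum_le_tsum fun k => ?_
  rw [← ENNReal.ofReal_mul (by positivity), norm_Pmul hα.le]
  refine ENNReal.ofReal_le_ofReal ?_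
  have := Real.rpow_mul_inv_one_add_mul_rpow_sq_le (one_le_nrmSq k) hα h
  calc nrmSq k ^ r * ((1 + α * nrmSq k ^ s)⁻¹ * ‖a k‖) ^ 2
      = nrmSq k ^ r * ((1 + α * nrmSq k ^ s)⁻¹) ^ 2 * ‖a k‖ ^ 2 := by ring
    _ ≤ α⁻¹ ^ 2 * nrmSq k ^ t * ‖a k‖ ^ 2 := by gcongr
    _ = _ := by ring

lemma tendsto_hsNormSq_Pmul_sub (hf : hsNormSq r a ≠ ⊤) :
    Tendsto (fun α => hsNormSq r (Pmul s α a - a)) (𝓝[≥] 0) (𝓝 0) := by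
  have hdom : ∀ᶠ α in 𝓝[≥] (0 : ℝ), ∀ k,
      ENNReal.ofReal (nrmSq k ^ r * ‖(Pmul s α a - a) k‖ ^ 2)
        ≤ ENNReal.ofReal (nrmSq k ^ r * ‖a k‖ ^ 2) := by
    filter_upwards [self_mem_nhdsWithin] with α hα k
    have := one_le_nrmSq k
    exact ENNReal.ofReal_le_ofReal <| by gcongr; exact norm_Pmul_sub_le hα
  have hpointwise : ∀ k, Tendsto (fun α => ENNReal.ofReal (nrmSq k ^ r * ‖(Pmul s α a - a) k‖ ^ 2))
      (𝓝[≥] 0) (𝓝 0) := by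
    intro k
    have hcont : ContinuousAt (fun α : ℝ => Pmul s α a k) 0 :=
      (ContinuousAt.inv₀ (by fun_prop) (by simp)).mul continuousAt_const
    have := ((hcont.sub (continuousAt_const (y := a k))).norm.pow 2).const_mul (nrmSq k ^ r)
    simpa [Pmul_zero_left] using
      (ENNReal.tendsto_ofReal this.tendsto).mono_left nhdsWithin_le_nhds
  simpa [hsNormSq] using ENNReal.tendsto_tsum_of_dominated_convergence _ hdom hf hpointwise

end Sobolev

section XRay

variable {Q : Set (Fin 2 → ℤ)} {vk : (Fin 2 → ℤ) → Q}

lemma Istar_IaQ_add (hvk : ∀ k : Fin 2 → ℤ, k ≠ 0 → dotZ k (vk k).1 = 0)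
    (f : (Fin 2 → ℤ) → ℂ) (g : (Fin 2 → ℤ) → Q → ℂ) :
    Istar Q vk (fun k v => IaQ Q f k v + g k v) = f + Istar Q vk g := by
  ext k
  have hk : dotZ k (vk k).1 = 0 := by
    by_cases h : k = 0
    · simp [h, dotZ]
    · exact hvk k h
  simp [Istar, IaQ, hk]

lemma hsNormSq_Istar_le (t : ℝ) (g : (Fin 2 → ℤ) → Q → ℂ) :
    hsNormSq t (Istar Q vk g) ≤ hsQNormSq t Q vk g := by
  rw [hsNormSq, ENNReal.tsum_eq_add_tsum_ite 0, hsQNormSq, nrmSq_zero, Real.one_rpow, one_mul]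
  refine add_le_add le_rfl ?_
  calc _ = ∑' k : {k : Fin 2 → ℤ // k ≠ 0},
          ENNReal.ofReal (nrmSq k ^ t * ‖g k (vk k)‖ ^ 2) := by
          refine ((tsum_subtype {k | k ≠ 0} fun k =>
            ENNReal.ofReal (nrmSq k ^ t * ‖Istar Q vk g k‖ ^ 2)).trans
              (tsum_congr fun k => ?_)).symm
          by_cases h : k = 0 <;> simp [h]
    _ ≤ _ := ENNReal.tsum_le_tsum fun k => ENNReal.le_tsum (vk k)

end XRay

lemma hsNormSq_reconstruction_error_le {r t s ε : ℝ} (hrts : r ≤ 2 * s + t) (hε : 0 < ε)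
    {Q : Set (Fin 2 → ℤ)} {vk : (Fin 2 → ℤ) → Q}
    (hvk : ∀ k : Fin 2 → ℤ, k ≠ 0 → dotZ k (vk k).1 = 0)
    (f : (Fin 2 → ℤ) → ℂ) {g : (Fin 2 → ℤ) → Q → ℂ}
    (hg : hsQNormSq t Q vk g ≤ ENNReal.ofReal (ε ^ 2)) :
    hsNormSq r (Pmul s (√ε) (Istar Q vk (fun k v => IaQ Q f k v + g k v)) - f)
      ≤ 2 * ENNReal.ofReal ε + 2 * hsNormSq r (Pmul s (√ε) f - f) := by
  have hα : 0 < √ε := Real.sqrt_pos.2 hε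
  have hnoise : hsNormSq r (Pmul s (√ε) (Istar Q vk g)) ≤ ENNReal.ofReal ε :=
    calc hsNormSq r (Pmul s (√ε) (Istar Q vk g))
        ≤ ENNReal.ofReal ((√ε)⁻¹ ^ 2) * hsNormSq t (Istar Q vk g) :=
          hsNormSq_Pmul_le hα (by linarith)
      _ ≤ ENNReal.ofReal ((√ε)⁻¹ ^ 2) * ENNReal.ofReal (ε ^ 2) := by
          gcongr; exact (hsNormSq_Istar_le t g).trans hg
      _ = ENNReal.ofReal ε := by
          rw [← ENNReal.ofReal_mul (by positivity), inv_pow, Real.sq_sqrt hε.le]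
          field_simp
  calc hsNormSq r (Pmul s (√ε) (Istar Q vk (fun k v => IaQ Q f k v + g k v)) - f)
      = hsNormSq r (Pmul s (√ε) (Istar Q vk g) + (Pmul s (√ε) f - f)) := by
        rw [Istar_IaQ_add hvk, Pmul_add]; abel_nf
    _ ≤ 2 * hsNormSq r (Pmul s (√ε) (Istar Q vk g)) + 2 * hsNormSq r (Pmul s (√ε) f - f) :=
        hsNormSq_add_le
    _ ≤ 2 * ENNReal.ofReal ε + 2 * hsNormSq r (Pmul s (√ε) f - f) := by gcongr

lemma tendsto_reconstruction_error_bound {r s : ℝ} {f : (Fin 2 → ℤ) → ℂ}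
    (hf : hsNormSq r f ≠ ⊤) :
    Tendsto (fun ε => (2 * ENNReal.ofReal ε + 2 * hsNormSq r (Pmul s (√ε) f - f)) ^ (1 / 2 : ℝ))
      (𝓝[>] 0) (𝓝 0) := by
  have hsqrt : Tendsto Real.sqrt (𝓝[>] 0) (𝓝[≥] 0) :=
    tendsto_nhdsWithin_iff.2 ⟨(Real.continuous_sqrt.tendsto' 0 0 Real.sqrt_zero).mono_left
      nhdsWithin_le_nhds, .of_forall fun ε => Real.sqrt_nonneg ε⟩
  have hid : Tendsto ENNReal.ofReal (𝓝[>] 0) (𝓝 0) := by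
    simpa using (ENNReal.tendsto_ofReal (tendsto_id (x := 𝓝 (0 : ℝ)))).mono_left
      nhdsWithin_le_nhds
  have hsum : Tendsto (fun ε => 2 * ENNReal.ofReal ε + 2 * hsNormSq r (Pmul s (√ε) f - f))
      (𝓝[>] 0) (𝓝 0) := by
    simpa using (ENNReal.Tendsto.const_mul hid (.inr ENNReal.ofNat_ne_top)).add
      (ENNReal.Tendsto.const_mul ((tendsto_hsNormSq_Pmul_sub hf).comp hsqrt)
        (.inr ENNReal.ofNat_ne_top))
  simpa [Function.comp_def] using
    ((ENNReal.continuous_rpow_const (y := 1 / 2)).tendsto 0).comp hsum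

theorem regularization_strategy_general
    (r t s δ : ℝ) (hrts : r ≤ 2*s + t) (hδ : 0 ≤ δ)
    (Q : Set (Fin 2 → ℤ))
    (vk : (Fin 2 → ℤ) → Q)
    (hvk : ∀ k : Fin 2 → ℤ, k ≠ 0 →
      dotZ k (vk k).1 = 0 ∧ ∀ v : Q, dotZ k v.1 = 0 → v = vk k)
    (f : (Fin 2 → ℤ) → ℂ) (hf : hsNormSq (r + δ) f < ⊤) :
    Filter.Tendsto
      (fun ε : ℝ =>
        ⨆ (g : (Fin 2 → ℤ) → Q → ℂ) (_ : ∀ v w : Q, g 0 v = g 0 w)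
          (_ : hsQNormSq t Q vk g ≤ ENNReal.ofReal (ε ^ 2)),
          (hsNormSq r (fun k =>
            Pmul s (Real.sqrt ε) (Istar Q vk (fun k' v => IaQ Q f k' v + g k' v)) k - f k))
            ^ (1/2 : ℝ))
      (nhdsWithin 0 (Set.Ioi 0)) (nhds 0) := by
  refine tendsto_of_tendsto_of_tendsto_of_le_of_le' tendsto_const_nhds
    (tendsto_reconstruction_error_bound (s := s)
      (ne_top_of_le_ne_top hf.ne (hsNormSq_mono (le_add_of_nonneg_right hδ))))
    (.of_forall fun _ => zero_le) ?_
  filter_upwards [self_mem_nhdsWithin] with ε hε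
  refine iSup₂_le fun g _ => iSup_le fun hg => ?_
  gcongr
  exact hsNormSq_reconstruction_error_le hrts hε (fun k hk => (hvk k hk).1) f hg

theorem regularization_strategy
    (r t s δ : ℝ) (hrts : r ≤ 2*s + t) (hδ : 0 ≤ δ) (hs : 0 < s)
    (Q : Set (Fin 2 → ℤ))
    (hQ0 : ∀ v ∈ Q, v ≠ 0)
    (hQ : ∀ v : Fin 2 → ℤ, v ≠ 0 → ∃! q, q ∈ Q ∧ ∃ m : ℤ, v = m • q)
    (vk : (Fin 2 → ℤ) → Q)
    (hvk : ∀ k : Fin 2 → ℤ, k ≠ 0 →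
      dotZ k (vk k).1 = 0 ∧ ∀ v : Q, dotZ k v.1 = 0 → v = vk k)
    (f : (Fin 2 → ℤ) → ℂ) (hf : hsNormSq (r + δ) f < ⊤) :
    Filter.Tendsto
      (fun ε : ℝ =>
        ⨆ (g : (Fin 2 → ℤ) → Q → ℂ) (_ : ∀ v w : Q, g 0 v = g 0 w)
          (_ : hsQNormSq t Q vk g ≤ ENNReal.ofReal (ε ^ 2)),
          (hsNormSq r (fun k =>
            Pmul s (Real.sqrt ε) (Istar Q vk (fun k' v => IaQ Q f k' v + g k' v)) k - f k))
            ^ (1/2 : ℝ))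
      (nhdsWithin 0 (Set.Ioi 0)) (nhds 0) :=
  regularization_strategy_general r t s δ hrts hδ Q vk hvk f hf
end
end
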